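/- arXiv:2006.00620 — 5 statements merged into one kernel-verified Lean document; each statement's English description precedes it below -/
import Mathlib

section
/- For all integers m, l ≥ 1, Σ_{n=1}^∞ H_n^{(3)} / ((n+m)·C(n+m+l, l)) = Σ_{j=0}^{l−1} (−1)^j · C(l−1, j) · H_{m+j} / (m+j)³ + (1 / (m·C(m+l−1, l−1))) · { ζ(3) − (π²/6)·(H_{m+l−1} − H_{m−1}) }. -/
open Finset Real

/-- The generalized harmonic number `H_n^{(p)} = ∑_{k=1}^n 1/k^p`. -/
noncomputable def gH (p : ℤ) (n : ℕ) : ℝ := ∑ k ∈ Finset.Icc 1 n, ((k : ℝ) ^ p)⁻¹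

/-- The generalized hyperharmonic number `H_n^{(p,q)}`:
`H_n^{(p,0)} = 1/n^p` (with `H_0^{(p,q)} = 0`) and
`H_n^{(p,q)} = ∑_{k=1}^n H_k^{(p,q-1)}` for `q ≥ 1`. -/
noncomputable def gHH (p : ℤ) : ℕ → ℕ → ℝ
  | 0, n => if n = 0 then 0 else ((n : ℝ) ^ p)⁻¹
  | q + 1, n => ∑ k ∈ Finset.Icc 1 n, gHH p q k

/-- Euler sum of generalized harmonic numbers `ζ_{H^{(p)}}(r) = ∑_{n≥1} H_n^{(p)}/n^r`. -/
noncomputable def eulerSum (p r : ℤ) : ℝ := ∑' n : ℕ+, gH p n / (n : ℝ) ^ r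

/-- Euler sum of generalized hyperharmonic numbers
`ζ_{H^{(p,q)}}(r) = ∑_{n≥1} H_n^{(p,q)}/n^r`. -/
noncomputable def eulerSumHH (p : ℤ) (q : ℕ) (r : ℤ) : ℝ := ∑' n : ℕ+, gHH p q n / (n : ℝ) ^ r

/-- Riemann zeta value at an integer argument, `ζ(s) = ∑_{n≥1} 1/n^s`. -/
noncomputable def zv (s : ℤ) : ℝ := ∑' n : ℕ+, ((n : ℝ) ^ s)⁻¹

/-- Unsigned Stirling numbers of the first kind, defined by
`x(x+1)⋯(x+q-1) = ∑_{k=0}^q [q,k] x^k`, i.e. `[n+1,k] = [n,k-1] + n·[n,k]`. -/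
def stirlingFirst : ℕ → ℕ → ℕ
  | 0, 0 => 1
  | 0, _ + 1 => 0
  | _ + 1, 0 => 0
  | n + 1, k + 1 => stirlingFirst n k + n * stirlingFirst n (k + 1)

/-- The series `μ(r,j) = ∑_{n≥1} 1/(n^r (n+j))`. -/
noncomputable def mu (r j : ℕ) : ℝ := ∑' n : ℕ+, 1 / ((n : ℝ) ^ r * ((n : ℝ) + j))

/-- `e_j(n+1, n+2, …, n+q)`: the `j`-th elementary symmetric polynomial
evaluated at the numbers `n+1, …, n+q`. -/
noncomputable def esymmVal (n q j : ℕ) : ℝ :=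
  ∑ s ∈ Finset.powersetCard j (Finset.Icc 1 q), ∏ i ∈ s, ((n : ℝ) + i)

/-! Write `1 / ((n + m) C(n + m + l, l)) = B(n + m, l)` with Euler's Beta function
`B(x, L + 1) = L! / (x (x + 1) ⋯ (x + L))`. Since `B(x, L + 1) = B(x, L) - B(x + 1, L)`,
Abel summation turns `∑ H_n^{(3)} B(n + m, l)` into `∑ B(n + m, l - 1) / n³`. Expanding
`B(x, L + 1) = ∑_j (-1)^j C(L, j) / (x + j)`, which is `(-1)^L` times the `L`-th forward
difference of `1 / x`, reduces this to the series
`∑_n 1 / (n³ (n + a)) = H_a / a³ + ζ(3) / a - ζ(2) / a²`, obtained from the telescoping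
`∑_n 1 / (n (n + a)) = H_a / a` by peeling off one power of `n` at a time. The `ζ(3)` and `ζ(2)`
parts then recombine into forward differences of `1 / x` and `1 / x²` at `x = m`. -/

open Filter Topology Polynomial
open scoped Nat

lemma gH_eq_sum_range (p : ℤ) (n : ℕ) : gH p n = ∑ i ∈ range n, (((i : ℝ) + 1) ^ p)⁻¹ := by
  rw [gH, ← Ico_add_one_right_eq_Icc, sum_Ico_eq_sum_range]
  simp [add_comm]

lemma gH_add_sub_gH (p : ℤ) (n k : ℕ) :
    gH p (n + k) - gH p n = ∑ i ∈ range k, (((n : ℝ) + i + 1) ^ p)⁻¹ := by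
  simp [gH_eq_sum_range, sum_range_add, add_assoc]

/-- Euler's Beta function `B(x, L + 1)` (note the shift in the second argument). -/
noncomputable def eulerBeta (x : ℝ) (L : ℕ) : ℝ := L ! / (ascPochhammer ℝ (L + 1)).eval x

lemma eulerBeta_zero (x : ℝ) : eulerBeta x 0 = x⁻¹ := by
  simp [eulerBeta]

lemma eulerBeta_nonneg {x : ℝ} (hx : 0 < x) (L : ℕ) : 0 ≤ eulerBeta x L :=
  div_nonneg (by positivity) (ascPochhammer_pos _ _ hx).le

lemma eulerBeta_eq_mul_eulerBeta_succ {x : ℝ} (hx : 0 < x) (L : ℕ) :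
    eulerBeta x L = eulerBeta x (L + 1) * (x + (L + 1)) / (L + 1) := by
  have := ascPochhammer_pos (L + 1) x hx
  simp only [eulerBeta, ascPochhammer_succ_eval (L + 1) x, Nat.factorial_succ]
  push_cast
  field_simp

lemma eulerBeta_add_one_eq_mul_eulerBeta_succ {x : ℝ} (hx : 0 < x) (L : ℕ) :
    eulerBeta (x + 1) L = eulerBeta x (L + 1) * x / (L + 1) := by
  have := ascPochhammer_pos (L + 1) (x + 1) (by positivity)
  simp only [eulerBeta, ascPochhammer_succ_left ℝ (L + 1), eval_mul, eval_X, eval_comp, eval_add,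
    eval_one, Nat.factorial_succ]
  push_cast
  field_simp

lemma eulerBeta_succ {x : ℝ} (hx : 0 < x) (L : ℕ) :
    eulerBeta x (L + 1) = eulerBeta x L - eulerBeta (x + 1) L := by
  rw [eulerBeta_eq_mul_eulerBeta_succ hx L, eulerBeta_add_one_eq_mul_eulerBeta_succ hx]
  field_simp
  ring

lemma eulerBeta_le_inv {x : ℝ} (hx : 0 < x) (L : ℕ) : eulerBeta x L ≤ x⁻¹ := by
  induction L with
  | zero => exact (eulerBeta_zero x).le
  | succ L ih => linarith [eulerBeta_succ hx L, eulerBeta_nonneg (hx.trans (lt_add_one x)) L]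

lemma eulerBeta_natCast (n L : ℕ) : eulerBeta n L = ((n : ℝ) * (n + L).choose L)⁻¹ := by
  rw [eulerBeta, ascPochhammer_nat_eq_natCast_ascFactorial, Nat.ascFactorial_succ,
    ← Nat.succ_ascFactorial, Nat.ascFactorial_eq_factorial_mul_choose]
  push_cast
  field_simp

lemma fwdDiff_iter_succ_apply {M G : Type*} [AddCommMonoid M] [AddCommGroup G] (h : M) (f : M → G)
    (n : ℕ) (y : M) :
    (fwdDiff h)^[n + 1] f y = (fwdDiff h)^[n] f (y + h) - (fwdDiff h)^[n] f y := by
  rw [Function.iterate_succ_apply', fwdDiff]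

lemma sum_alternating_choose_eq_fwdDiff_iter {R : Type*} [CommRing R] (g : R → R) (L : ℕ)
    (x : R) :
    ∑ j ∈ range (L + 1), (-1 : R) ^ j * L.choose j * g (x + j) =
      (-1) ^ L * (fwdDiff 1)^[L] g x := by
  rw [fwdDiff_iter_eq_sum_shift, mul_sum]
  refine sum_congr rfl fun j hj => ?_
  have hsign : (-1 : R) ^ L * (-1) ^ (L - j) = (-1) ^ j := by
    rw [← pow_add, show L + (L - j) = j + 2 * (L - j) by grind, pow_add, pow_mul, neg_one_sq,
      one_pow, mul_one]
  rw [zsmul_eq_mul, nsmul_one, ← hsign]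
  push_cast
  ring

lemma fwdDiff_iter_inv {x : ℝ} (hx : 0 < x) (L : ℕ) :
    (fwdDiff 1)^[L] (·⁻¹) x = (-1) ^ L * eulerBeta x L := by
  induction L generalizing x with
  | zero => simp [eulerBeta_zero]
  | succ L ih =>
    rw [fwdDiff_iter_succ_apply (G := ℝ), ih hx, ih (by positivity), eulerBeta_succ hx]
    ring

lemma fwdDiff_iter_inv_sq {x : ℝ} (hx : 0 < x) (L : ℕ) :
    (fwdDiff 1)^[L] (fun y => (y ^ 2)⁻¹) x =
      (-1) ^ L * eulerBeta x L * ∑ i ∈ range (L + 1), (x + i)⁻¹ := by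
  induction L generalizing x with
  | zero => simp [eulerBeta_zero, sq]
  | succ L ih =>
    have hsucc : ∑ i ∈ range (L + 1 + 1), (x + i)⁻¹ =
        x⁻¹ + ∑ i ∈ range (L + 1), (x + 1 + i)⁻¹ := by
      rw [sum_range_succ']
      simp [add_comm, add_left_comm]
    have hsum : ∑ i ∈ range (L + 1), (x + i)⁻¹ =
        x⁻¹ + ∑ i ∈ range (L + 1), (x + 1 + i)⁻¹ - (x + (L + 1))⁻¹ := by
      rw [← hsucc, sum_range_succ _ (L + 1)]
      push_cast
      ring
    rw [fwdDiff_iter_succ_apply (G := ℝ), ih hx, ih (by positivity),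
      eulerBeta_eq_mul_eulerBeta_succ hx, eulerBeta_add_one_eq_mul_eulerBeta_succ hx, hsum, hsucc]
    have : x + (L + 1) ≠ 0 := by positivity
    field_simp
    ring

lemma sum_alternating_choose_inv {x : ℝ} (hx : 0 < x) (L : ℕ) :
    ∑ j ∈ range (L + 1), (-1 : ℝ) ^ j * L.choose j * (x + j)⁻¹ = eulerBeta x L := by
  rw [sum_alternating_choose_eq_fwdDiff_iter (·⁻¹), fwdDiff_iter_inv hx, ← mul_assoc, ← mul_pow]
  simp

lemma sum_alternating_choose_inv_sq {x : ℝ} (hx : 0 < x) (L : ℕ) :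
    ∑ j ∈ range (L + 1), (-1 : ℝ) ^ j * L.choose j * ((x + j) ^ 2)⁻¹ =
      eulerBeta x L * ∑ i ∈ range (L + 1), (x + i)⁻¹ := by
  rw [sum_alternating_choose_eq_fwdDiff_iter (fun y => (y ^ 2)⁻¹), fwdDiff_iter_inv_sq hx,
    ← mul_assoc, ← mul_assoc, ← mul_pow]
  simp

lemma sum_alternating_choose_mul_div_sub_div_sq {x : ℝ} (hx : 0 < x) (A B : ℝ) (L : ℕ) :
    ∑ j ∈ range (L + 1), (-1 : ℝ) ^ j * L.choose j * (A / (x + j) - B / (x + j) ^ 2) =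
      eulerBeta x L * (A - B * ∑ i ∈ range (L + 1), (x + i)⁻¹) := by
  calc _ = A * ∑ j ∈ range (L + 1), (-1 : ℝ) ^ j * L.choose j * (x + j)⁻¹
        - B * ∑ j ∈ range (L + 1), (-1 : ℝ) ^ j * L.choose j * ((x + j) ^ 2)⁻¹ := by
        rw [mul_sum, mul_sum, ← sum_sub_distrib]
        exact sum_congr rfl fun j _ => by ring
    _ = _ := by rw [sum_alternating_choose_inv hx, sum_alternating_choose_inv_sq hx]; ring

lemma hasSum_sub_comp_add_of_antitone {f : ℕ → ℝ} (hf : Antitone f)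
    (hf0 : Tendsto f atTop (𝓝 0)) (a : ℕ) :
    HasSum (fun k => f k - f (k + a)) (∑ k ∈ range a, f k) := by
  have hstep (b : ℕ) : HasSum (fun k => f (k + b) - f (k + b + 1)) (f b) := by
    refine (hasSum_iff_tendsto_nat_of_nonneg (fun k => sub_nonneg.2 (hf (by omega))) _).2 ?_
    have hpartial (N : ℕ) : ∑ k ∈ range N, (f (k + b) - f (k + b + 1)) = f b - f (N + b) := by
      simpa [add_right_comm] using sum_range_sub' (fun k => f (k + b)) N
    simpa [hpartial] using tendsto_const_nhds.sub ((hf0.comp (tendsto_add_atTop_nat b)))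
  induction a with
  | zero => simp
  | succ a ih =>
    convert ih.add (hstep a) using 1
    · ext k
      rw [← add_assoc]
      ring
    · rw [sum_range_succ]

lemma hasSum_sum_range_mul_sub {a b : ℕ → ℝ} (ha : ∀ k, 0 ≤ a k) (hsa : Summable a)
    (hb : Antitone b) (hb0 : Tendsto b atTop (𝓝 0)) :
    HasSum (fun n => (∑ k ∈ range (n + 1), a k) * (b n - b (n + 1))) (∑' k, a k * b k) := by
  have hb_nonneg (k : ℕ) : 0 ≤ b k := hb.le_of_tendsto hb0 k
  have hsab : Summable (fun k => a k * b k) :=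
    (hsa.mul_right (b 0)).of_nonneg_of_le (fun k => mul_nonneg (ha k) (hb_nonneg k))
      (fun k => mul_le_mul_of_nonneg_left (hb (Nat.zero_le k)) (ha k))
  have hpartial (N : ℕ) : ∑ n ∈ range N, (∑ k ∈ range (n + 1), a k) * (b n - b (n + 1)) =
      ∑ k ∈ range N, a k * b k - (∑ k ∈ range N, a k) * b N := by
    induction N with
    | zero => simp
    | succ N ih =>
      rw [sum_range_succ, ih, sum_range_succ a, sum_range_succ (fun k => a k * b k)]
      ring
  refine (hasSum_iff_tendsto_nat_of_nonneg (fun n => mul_nonneg (sum_nonneg fun k _ => ha k)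
    (sub_nonneg.2 (hb n.le_succ))) _).2 ?_
  simpa [hpartial] using hsab.hasSum.tendsto_sum_nat.sub (hsa.hasSum.tendsto_sum_nat.mul hb0)

lemma hasSum_inv_succ_sq : HasSum (fun k : ℕ => (((k : ℝ) + 1) ^ 2)⁻¹) (π ^ 2 / 6) := by
  simpa [one_div] using (hasSum_nat_add_iff' 1).2 hasSum_zeta_two

lemma hasSum_inv_succ_cube : HasSum (fun k : ℕ => (((k : ℝ) + 1) ^ 3)⁻¹) (zv 3) := by
  have hs : Summable (fun k : ℕ => (((k : ℝ) + 1) ^ 3)⁻¹) := by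
    simpa using (summable_nat_add_iff 1).2 (Real.summable_nat_pow_inv.2 (by norm_num : 1 < 3))
  rw [zv, tsum_pnat_eq_tsum_succ (f := fun n : ℕ => ((n : ℝ) ^ (3 : ℤ))⁻¹)]
  simpa using hs.hasSum

lemma hasSum_inv_succ_mul_succ_add {a : ℕ} (ha : 0 < a) :
    HasSum (fun k : ℕ => (((k : ℝ) + 1) * (k + 1 + a))⁻¹) (gH 1 a / a) := by
  have hf : Antitone (fun k : ℕ => ((k : ℝ) + 1)⁻¹) := fun i j hij => by
    dsimp only
    gcongr
  have hf0 : Tendsto (fun k : ℕ => ((k : ℝ) + 1)⁻¹) atTop (𝓝 0) := by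
    simpa only [one_div] using tendsto_one_div_add_atTop_nhds_zero_nat (𝕜 := ℝ)
  have hval : gH 1 a = ∑ k ∈ range a, ((k : ℝ) + 1)⁻¹ := by simp [gH_eq_sum_range]
  rw [hval]
  refine ((hasSum_sub_comp_add_of_antitone hf hf0 a).div_const (a : ℝ)).congr_fun fun k => ?_
  have : (0 : ℝ) < a := by exact_mod_cast ha
  push_cast
  field_simp
  ring

lemma HasSum.inv_succ_pow_succ_mul_add {r : ℕ} {a M Z : ℝ} (ha : 0 < a)
    (hM : HasSum (fun k : ℕ => (((k : ℝ) + 1) ^ r * (k + 1 + a))⁻¹) M)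
    (hZ : HasSum (fun k : ℕ => (((k : ℝ) + 1) ^ (r + 1))⁻¹) Z) :
    HasSum (fun k : ℕ => (((k : ℝ) + 1) ^ (r + 1) * (k + 1 + a))⁻¹) ((Z - M) / a) := by
  refine ((hZ.sub hM).div_const a).congr_fun fun k => ?_
  have : (0 : ℝ) < k + 1 + a := add_pos (by positivity) ha
  field_simp
  ring

lemma hasSum_inv_succ_cube_mul_succ_add {a : ℕ} (ha : 0 < a) :
    HasSum (fun k : ℕ => (((k : ℝ) + 1) ^ 3 * (k + 1 + a))⁻¹)
      (gH 1 a / a ^ 3 + (zv 3 / a - π ^ 2 / 6 / a ^ 2)) := by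
  have ha' : (0 : ℝ) < a := by exact_mod_cast ha
  have h₁ : HasSum (fun k : ℕ => (((k : ℝ) + 1) ^ 1 * (k + 1 + a))⁻¹) (gH 1 a / a) := by
    simpa using hasSum_inv_succ_mul_succ_add ha
  convert (h₁.inv_succ_pow_succ_mul_add ha' hasSum_inv_succ_sq).inv_succ_pow_succ_mul_add ha'
    hasSum_inv_succ_cube using 1
  field_simp
  ring

lemma hasSum_gH_three_mul_eulerBeta_succ {x : ℝ} (hx : 0 ≤ x) (L : ℕ) :
    HasSum (fun k : ℕ => gH 3 (k + 1) * eulerBeta (k + 1 + x) (L + 1))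
      (∑' k : ℕ, (((k : ℝ) + 1) ^ 3)⁻¹ * eulerBeta (k + 1 + x) L) := by
  have hpos (k : ℕ) : 0 < (k : ℝ) + 1 + x := by positivity
  have hshift (k : ℕ) : ((k + 1 : ℕ) : ℝ) + 1 + x = (k + 1 + x) + 1 := by push_cast; ring
  have hb : Antitone (fun k : ℕ => eulerBeta (k + 1 + x) L) := by
    refine antitone_nat_of_succ_le fun k => ?_
    have := eulerBeta_nonneg (hpos k) (L + 1)
    rw [eulerBeta_succ (hpos k), ← hshift] at this
    linarith
  have hb0 : Tendsto (fun k : ℕ => eulerBeta (k + 1 + x) L) atTop (𝓝 0) := by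
    refine squeeze_zero (fun k => eulerBeta_nonneg (hpos k) L)
      (fun k => eulerBeta_le_inv (hpos k) L) (tendsto_inv_atTop_zero.comp ?_)
    exact tendsto_atTop_add_const_right _ x
      (tendsto_atTop_add_const_right _ 1 tendsto_natCast_atTop_atTop)
  refine (hasSum_sum_range_mul_sub (fun k => by positivity) hasSum_inv_succ_cube.summable hb
    hb0).congr_fun fun k => ?_
  rw [gH_eq_sum_range, eulerBeta_succ (hpos k), ← hshift]
  norm_cast

lemma hasSum_inv_succ_cube_mul_eulerBeta {m : ℕ} (hm : 0 < m) (L : ℕ) :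
    HasSum (fun k : ℕ => (((k : ℝ) + 1) ^ 3)⁻¹ * eulerBeta (k + 1 + m) L)
      (∑ j ∈ range (L + 1), (-1 : ℝ) ^ j * L.choose j *
        (gH 1 (m + j) / ((m : ℝ) + j) ^ 3 +
          (zv 3 / ((m : ℝ) + j) - π ^ 2 / 6 / ((m : ℝ) + j) ^ 2))) := by
  have := hasSum_sum fun j (_ : j ∈ range (L + 1)) =>
    (hasSum_inv_succ_cube_mul_succ_add (a := m + j) (by omega)).mul_left
      ((-1 : ℝ) ^ j * L.choose j)
  push_cast at this
  refine this.congr_fun fun k => ?_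
  rw [← sum_alternating_choose_inv (by positivity : (0 : ℝ) < k + 1 + m), mul_sum]
  refine sum_congr rfl fun j _ => ?_
  rw [mul_inv]
  ring

lemma sum_range_inv_add_eq_gH_sub {m : ℕ} (hm : 1 ≤ m) (k : ℕ) :
    ∑ i ∈ range k, ((m : ℝ) + i)⁻¹ = gH 1 (m - 1 + k) - gH 1 (m - 1) := by
  rw [gH_add_sub_gH]
  push_cast [Nat.cast_sub hm, zpow_one]
  exact sum_congr rfl fun i _ => by ring

/-- The case `p = 3`. -/
theorem stmt_12 (m l : ℕ) (hm : 1 ≤ m) (hl : 1 ≤ l) :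
    ∑' n : ℕ+, gH 3 n / (((n : ℝ) + m) * ((((n : ℕ) + m + l).choose l : ℕ) : ℝ))
      = ∑ j ∈ Finset.range l,
          (-1 : ℝ) ^ j * ((l - 1).choose j : ℝ) * gH 1 (m + j) / ((m : ℝ) + j) ^ 3
        + (1 / ((m : ℝ) * (((m + l - 1).choose (l - 1) : ℕ) : ℝ))) *
            (zv 3 - Real.pi ^ 2 / 6 * (gH 1 (m + l - 1) - gH 1 (m - 1))) := by
  obtain ⟨L, rfl⟩ := Nat.exists_eq_add_of_le' hl
  have hterm (k : ℕ) : gH 3 (k + 1) /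
      ((((k + 1 : ℕ) : ℝ) + m) * (((k + 1 + m + (L + 1)).choose (L + 1) : ℕ) : ℝ)) =
      gH 3 (k + 1) * eulerBeta (k + 1 + m) (L + 1) := by
    rw [div_eq_mul_inv, ← Nat.cast_add_one, ← Nat.cast_add, eulerBeta_natCast]
  rw [tsum_pnat_eq_tsum_succ
      (f := fun n => gH 3 n / ((n + m : ℝ) * ((n + m + (L + 1)).choose (L + 1)))),
    tsum_congr hterm, (hasSum_gH_three_mul_eulerBeta_succ (Nat.cast_nonneg m) L).tsum_eq,
    (hasSum_inv_succ_cube_mul_eulerBeta hm L).tsum_eq]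
  simp only [mul_add, sum_add_distrib]
  rw [sum_alternating_choose_mul_div_sub_div_sq (by positivity), sum_range_inv_add_eq_gH_sub hm,
    eulerBeta_natCast, Nat.add_sub_cancel, show m + (L + 1) - 1 = m + L by omega,
    show m - 1 + (L + 1) = m + L by omega, one_div]
  simp only [mul_div_assoc]
end

section
/- For all integers r ≥ 2 and j ≥ 1, the series μ(r, j) = Σ_{n=1}^∞ 1/(n^r (n+j)) satisfies the closed form μ(r, j) = Σ_{k=1}^{r−1} (−1)^{k−1} · ζ(r+1−k) / j^k + (−1)^{r−1} · H_j / j^r, where H_j is the j-th harmonic number and ζ the Riemann zeta function. -/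
open Finset Real

/-!
Partial fractions give `j / (n^(r+1) (n+j)) = 1/n^(r+1) - 1/(n^r (n+j))`, hence the recurrence
`j μ(r+1, j) = ζ(r+1) - μ(r, j)`. It starts from `μ(1, j) = H_j / j`, where
`1/(n(n+j)) = (1/n - 1/(n+j)) / j` telescopes, and unrolling it gives the closed form.
-/

open Filter Topology

theorem Finset.sum_Icc_one_eq_sum_range {M : Type*} [AddCommMonoid M] (f : ℕ → M) (m : ℕ) :
    ∑ k ∈ Icc 1 m, f k = ∑ k ∈ range m, f (k + 1) := by
  rw [← Ico_add_one_right_eq_Icc, range_eq_Ico, sum_Ico_add']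

theorem Antitone.hasSum_sub_comp_add {f : ℕ → ℝ} (hf : Antitone f)
    (hf0 : Tendsto f atTop (𝓝 0)) (j : ℕ) :
    HasSum (fun n ↦ f n - f (n + j)) (∑ i ∈ range j, f i) := by
  rw [hasSum_iff_tendsto_nat_of_nonneg fun n ↦ sub_nonneg.2 (hf (Nat.le_add_right n j))]
  have partial_sum (N : ℕ) : ∑ n ∈ range N, (f n - f (n + j))
      = ∑ i ∈ range j, f i - ∑ i ∈ range j, f (N + i) := by
    have h₁ := sum_range_add f N j
    have h₂ := sum_range_add f j N
    simp only [add_comm j] at h₂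
    rw [sum_sub_distrib]
    linarith
  have tail : Tendsto (fun N ↦ ∑ i ∈ range j, f (N + i)) atTop (𝓝 0) := by
    simpa using tendsto_finsetSum (range j) fun i _ ↦ hf0.comp (tendsto_add_atTop_nat i)
  simpa [partial_sum] using tendsto_const_nhds.sub tail

theorem summable_pnat_inv_pow {s : ℕ} (hs : 2 ≤ s) : Summable fun n : ℕ+ ↦ ((n : ℝ) ^ s)⁻¹ :=
  summable_pnat_iff_summable_nat.2 (Real.summable_nat_pow_inv.2 hs)

theorem zv_natCast (s : ℕ) : zv s = ∑' n : ℕ+, ((n : ℝ) ^ s)⁻¹ := by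
  simp only [zv, zpow_natCast]

theorem summable_mu (r j : ℕ) (hr : 1 ≤ r) :
    Summable fun n : ℕ+ ↦ 1 / ((n : ℝ) ^ r * ((n : ℝ) + j)) := by
  refine (summable_pnat_inv_pow (s := r + 1) (by omega)).of_nonneg_of_le
    (fun n ↦ by positivity) fun n ↦ ?_
  rw [one_div, pow_succ]
  exact inv_anti₀ (by positivity)
    (mul_le_mul_of_nonneg_left (le_add_of_nonneg_right j.cast_nonneg) (by positivity))

theorem mu_one (j : ℕ) (hj : j ≠ 0) : mu 1 j = gH 1 j / j := by
  have telescope := (Antitone.hasSum_sub_comp_add (f := fun n : ℕ ↦ 1 / ((n : ℝ) + 1))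
    (fun a b h ↦ by dsimp only; gcongr) tendsto_one_div_add_atTop_nhds_zero_nat j).div_const j
  rw [mu, tsum_pnat_eq_tsum_succ (f := fun n : ℕ ↦ 1 / ((n : ℝ) ^ 1 * ((n : ℝ) + j)))]
  convert telescope.tsum_eq using 1
  · congr 1 with n
    field_simp
    push_cast
    ring
  · rw [gH, sum_Icc_one_eq_sum_range]
    simp

theorem mul_mu_succ (r j : ℕ) (hr : 1 ≤ r) :
    j * mu (r + 1) j = zv (r + 1) - mu r j := by
  rw [← Nat.cast_succ, zv_natCast, mu, mu, ← tsum_mul_left,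
    ← (summable_pnat_inv_pow (by omega)).tsum_sub (summable_mu r j hr)]
  congr 1 with n
  field_simp
  ring

theorem mu_succ_eq_sum (j : ℕ) (hj : j ≠ 0) (m : ℕ) :
    mu (m + 1) j = ∑ k ∈ range m, (-1 : ℝ) ^ k * zv ((m : ℤ) + 1 - k) / (j : ℝ) ^ (k + 1)
      + (-1 : ℝ) ^ m * gH 1 j / (j : ℝ) ^ (m + 1) := by
  induction m with
  | zero => simp [mu_one j hj]
  | succ m ih =>
    have hj' : (j : ℝ) ≠ 0 := by exact_mod_cast hj
    have step := mul_mu_succ (m + 1) j (by omega)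
    rw [ih] at step
    rw [sum_range_succ']
    have hshift (k : ℕ) : ((m + 1 : ℕ) : ℤ) + 1 - (k + 1 : ℕ) = (m : ℤ) + 1 - k := by
      push_cast; ring
    have hterm (k : ℕ) : (-1 : ℝ) ^ (k + 1) * zv ((m : ℤ) + 1 - k) / (j : ℝ) ^ (k + 1 + 1)
        = -((-1 : ℝ) ^ k * zv ((m : ℤ) + 1 - k) / (j : ℝ) ^ (k + 1)) / j := by
      ring
    simp only [hshift, hterm, sum_neg_distrib, ← sum_div, pow_zero, one_mul, Nat.cast_zero,
      sub_zero, zero_add, pow_one]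
    apply mul_left_cancel₀ hj'
    rw [step]
    field_simp
    ring

/-- Closed form of `μ(r,j) = ∑_{n≥1} 1/(n^r (n+j))` for `r ≥ 2`, `j ≥ 1`. -/
theorem stmt_13 (r j : ℕ) (hr : 2 ≤ r) (hj : 1 ≤ j) :
    mu r j
      = ∑ k ∈ Finset.Icc 1 (r - 1),
          (-1 : ℝ) ^ (k - 1) * zv ((r : ℤ) + 1 - k) / (j : ℝ) ^ k
        + (-1 : ℝ) ^ (r - 1) * gH 1 j / (j : ℝ) ^ r := by
  obtain ⟨m, rfl⟩ : ∃ m, r = m + 1 := ⟨r - 1, by omega⟩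
  rw [mu_succ_eq_sum j (by omega) m, Nat.add_sub_cancel, sum_Icc_one_eq_sum_range]
  congr 2 with k
  rw [Nat.add_sub_cancel]
  congr 3
  push_cast
  ring
end

section
/- For all integers p ≥ 2 and l > 1, Σ_{n=1}^∞ H_n^{(p)} / C(n+l, l) = ζ(p) + Σ_{j=1}^{l−1} (−1)^j · { C(l−1, j)·μ(p−1, j) − C(l−2, j−1)·μ(p, j) }, where μ(r, j) = Σ_{n=1}^∞ 1/(n^r (n+j)). -/
open Finset Real

/-
Expanding `H_n^{(p)} = ∑_{k ≤ n} k^{-p}` and exchanging the order of summation (all terms are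
nonnegative) turns the series into `∑_k k^{-p} ∑_{n ≥ k} 1/C(n+l,l)`. Writing `l = q + 1`, the tail
telescopes to `((q+1)/q) / C(k+q,q)`, and `1/C(k+q,q) = k ∑_j (-1)^j C(q,j)/(k+j)` is the
partial-fraction expansion obtained from the `q`-th forward difference of `x ↦ 1/x`. This gives
`((q+1)/q) ∑_{j=0}^q (-1)^j C(q,j) μ(p-1,j)` with `μ(p-1,0) = ζ(p)`; the stated form follows from
`j μ(p,j) = ζ(p) - μ(p-1,j)`, `j C(q,j) = q C(q-1,j-1)` and `∑_{j=1}^q (-1)^j C(q,j) = -1`.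
-/

open Filter Topology fwdDiff
open scoped Nat

theorem fwdDiff_iter_inv_s14 (q : ℕ) {t : ℝ} (ht : 0 < t) :
    Δ_[1] ^[q] (fun s : ℝ ↦ s⁻¹) t
      = (-1) ^ q * q ! * (∏ j ∈ range (q + 1), (t + j))⁻¹ := by
  induction q generalizing t with
  | zero => simp
  | succ q ih =>
    have hlast : ∏ j ∈ range (q + 2), (t + j) = (∏ j ∈ range (q + 1), (t + j)) * (t + (q + 1)) := by
      rw [prod_range_succ]; push_cast; ring
    have hfirst : ∏ j ∈ range (q + 2), (t + j) = t * ∏ j ∈ range (q + 1), (t + 1 + j) := by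
      rw [prod_range_succ']; push_cast; simp only [add_assoc, add_comm (1 : ℝ)]; ring
    have hA :
        (∏ j ∈ range (q + 1), (t + j))⁻¹ = (t + (q + 1)) * (∏ j ∈ range (q + 2), (t + j))⁻¹ := by
      rw [hlast]; field_simp
    have hB : (∏ j ∈ range (q + 1), (t + 1 + j))⁻¹ = t * (∏ j ∈ range (q + 2), (t + j))⁻¹ := by
      rw [hfirst]; field_simp
    rw [Function.iterate_succ_apply', fwdDiff, ih (by positivity), ih ht]
    push_cast [hA, hB, Nat.factorial_succ]
    ring

theorem factorial_mul_inv_prod_range_add (q : ℕ) {x : ℝ} (hx : 0 < x) :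
    q ! * (∏ j ∈ range (q + 1), (x + j))⁻¹
      = ∑ j ∈ range (q + 1), (-1) ^ j * q.choose j * (x + j)⁻¹ := by
  have h := fwdDiff_iter_eq_sum_shift 1 (fun s : ℝ ↦ s⁻¹) q x
  rw [fwdDiff_iter_inv_s14 q hx] at h
  calc (q ! : ℝ) * (∏ j ∈ range (q + 1), (x + j))⁻¹
      = (-1) ^ q * ((-1) ^ q * q ! * (∏ j ∈ range (q + 1), (x + j))⁻¹) := by
        rw [← mul_assoc, ← mul_assoc, ← pow_add, Even.neg_one_pow ⟨q, rfl⟩, one_mul]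
    _ = _ := by
      rw [h, mul_sum]
      refine sum_congr rfl fun j hj ↦ ?_
      have hsign : q + (q - j) = j + 2 * (q - j) := by have := mem_range.mp hj; omega
      rw [zsmul_eq_mul, nsmul_eq_mul, mul_one]
      push_cast
      rw [← mul_assoc, ← mul_assoc, ← pow_add, hsign, pow_add, pow_mul]
      simp

theorem prod_range_add_eq_mul_factorial_mul_choose (n q : ℕ) :
    ∏ j ∈ range (q + 1), (n + j) = n * (q ! * (n + q).choose q) := by
  rw [← Nat.ascFactorial_eq_factorial_mul_choose, Nat.ascFactorial_eq_prod_range, prod_range_succ',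
    add_zero, mul_comm]
  simp only [add_assoc, add_comm 1]

theorem inv_choose_add_eq_sum (q : ℕ) {n : ℕ} (hn : 0 < n) :
    (((n + q).choose q : ℕ) : ℝ)⁻¹
      = n * ∑ j ∈ range (q + 1), (-1) ^ j * q.choose j * ((n : ℝ) + j)⁻¹ := by
  have hprod : ∏ j ∈ range (q + 1), ((n : ℝ) + j) = n * (q ! * (n + q).choose q) := by
    exact_mod_cast prod_range_add_eq_mul_factorial_mul_choose n q
  rw [← factorial_mul_inv_prod_range_add q (by positivity), hprod]
  field_simp

theorem hasSum_sub_succ_of_antitone {f : ℕ → ℝ} {l : ℝ} (hf : Antitone f)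
    (hl : Tendsto f atTop (𝓝 l)) : HasSum (fun n ↦ f n - f (n + 1)) (f 0 - l) := by
  rw [hasSum_iff_tendsto_nat_of_nonneg (fun n ↦ sub_nonneg.mpr (hf n.le_succ))]
  simpa only [sum_range_sub'] using hl.const_sub (f 0)

theorem inv_choose_succ_eq_sub (q N : ℕ) (hq : q ≠ 0) :
    (((N + q + 1).choose (q + 1) : ℕ) : ℝ)⁻¹
      = (q + 1) / q * ((((N + q).choose q : ℕ) : ℝ)⁻¹ - (((N + 1 + q).choose q : ℕ) : ℝ)⁻¹) := by
  have hpos : (0 : ℝ) < (N + q).choose q := by exact_mod_cast Nat.choose_pos (by omega)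
  have hup : (((N + q + 1).choose (q + 1) : ℕ) : ℝ) = (N + q + 1) * (N + q).choose q / (q + 1) := by
    rw [eq_div_iff (by positivity)]
    exact_mod_cast (Nat.add_one_mul_choose_eq (N + q) q).symm
  have hright : (((N + 1 + q).choose q : ℕ) : ℝ) = (N + q + 1) * (N + q).choose q / (N + 1) := by
    have := Nat.add_one_mul_choose_eq (N + q) N
    rw [Nat.choose_symm_add, show N + q + 1 = N + 1 + q by omega, Nat.choose_symm_add] at this
    rw [eq_div_iff (by positivity)]
    rw [← Nat.cast_inj (R := ℝ)] at this
    push_cast at this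
    linarith
  rw [hup, hright]
  field_simp
  ring

theorem le_choose_add_of_ne_zero (n : ℕ) {q : ℕ} (hq : q ≠ 0) : n + 1 ≤ (n + q).choose q := by
  calc n + 1 = (n + 1).choose n := (Nat.choose_succ_self_right n).symm
    _ ≤ (n + q).choose n := Nat.choose_le_choose n (by omega)
    _ = (n + q).choose q := Nat.choose_symm_add

theorem hasSum_inv_choose_add (q b : ℕ) (hq : q ≠ 0) :
    HasSum (fun i ↦ (((i + b + q + 1).choose (q + 1) : ℕ) : ℝ)⁻¹)
      ((q + 1) / q * (((b + q).choose q : ℕ) : ℝ)⁻¹) := by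
  set g : ℕ → ℝ := fun i ↦ (((i + b + q).choose q : ℕ) : ℝ)⁻¹
  have hg : Antitone g := antitone_nat_of_succ_le fun i ↦ by
    apply inv_anti₀ (by exact_mod_cast Nat.choose_pos (by omega))
    exact_mod_cast Nat.choose_le_choose q (by omega)
  have hlim : Tendsto g atTop (𝓝 0) := by
    refine tendsto_inv_atTop_zero.comp (tendsto_natCast_atTop_atTop.comp ?_)
    refine tendsto_atTop_mono (fun i ↦ ?_) tendsto_id
    have := le_choose_add_of_ne_zero (i + b) hq
    simp only [id]
    omega
  have hterm : (fun i ↦ (((i + b + q + 1).choose (q + 1) : ℕ) : ℝ)⁻¹)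
      = fun i ↦ (q + 1) / q * (g i - g (i + 1)) := funext fun i ↦ by
    rw [inv_choose_succ_eq_sub q (i + b) hq, add_right_comm i b 1]
  simpa [hterm, g] using (hasSum_sub_succ_of_antitone hg hlim).mul_left ((q + 1 : ℝ) / q)

theorem tsum_sum_range_mul_eq_tsum_mul_tsum_add {f a : ℕ → ℝ} (hf : 0 ≤ f) (ha : 0 ≤ a)
    (hfs : Summable f) (has : Summable a) :
    ∑' n, (∑ k ∈ range (n + 1), f k) * a n = ∑' k, f k * ∑' i, a (i + k) := by
  set F : ℕ → ℕ → ℝ := fun n k ↦ if k ≤ n then f k * a n else 0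
  have hF : 0 ≤ Function.uncurry F := fun x ↦ by
    dsimp only [F, Function.uncurry]
    split_ifs
    exacts [mul_nonneg (hf _) (ha _), le_rfl]
  have hrow_zero (n k : ℕ) (hk : k ∉ range (n + 1)) : F n k = 0 :=
    if_neg (by simpa [Nat.lt_succ_iff] using hk)
  have hrow (n : ℕ) : ∑' k, F n k = (∑ k ∈ range (n + 1), f k) * a n := by
    rw [tsum_eq_sum (hrow_zero n), sum_mul]
    exact sum_congr rfl fun k hk ↦ if_pos (Nat.lt_succ_iff.mp (mem_range.mp hk))
  have hcol (k : ℕ) : ∑' n, F n k = f k * ∑' i, a (i + k) := by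
    have hs : Summable (F · k) := (has.mul_left (f k)).of_nonneg_of_le (fun n ↦ hF (n, k))
      fun n ↦ by
        dsimp only [F]
        split_ifs
        exacts [le_rfl, mul_nonneg (hf _) (ha _)]
    rw [← hs.sum_add_tsum_nat_add k, sum_eq_zero fun n hn ↦ if_neg (by simpa using hn),
      zero_add, ← tsum_mul_left]
    exact tsum_congr fun i ↦ if_pos (Nat.le_add_left k i)
  have hsum : Summable (Function.uncurry F) := by
    refine (summable_prod_of_nonneg hF).mpr ⟨fun n ↦ summable_of_ne_finset_zero (hrow_zero n), ?_⟩
    simp only [Function.uncurry_apply_pair, hrow]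
    refine (has.mul_left (∑' k, f k)).of_nonneg_of_le
      (fun n ↦ mul_nonneg (sum_nonneg fun k _ ↦ hf k) (ha n)) fun n ↦ ?_
    exact mul_le_mul_of_nonneg_right (hfs.sum_le_tsum _ fun k _ ↦ hf k) (ha n)
  rw [← tsum_congr hrow, ← hsum.tsum_comm, tsum_congr hcol]

theorem gH_succ_eq_sum_range (p n : ℕ) : gH p (n + 1) = ∑ k ∈ range (n + 1), (((k : ℝ) + 1) ^ p)⁻¹ := by
  have := sum_Ico_add' (fun k : ℕ ↦ ((k : ℝ) ^ p)⁻¹) 0 (n + 1) 1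
  simp only [zero_add, Nat.cast_add, Nat.cast_one, Ico_add_one_right_eq_Icc] at this
  rw [gH, Nat.range_succ_eq_Icc_zero, this]
  simp only [zpow_natCast]

theorem zv_natCast_eq_tsum (p : ℕ) : zv p = ∑' k : ℕ, (((k : ℝ) + 1) ^ p)⁻¹ :=
  (tsum_pnat_eq_tsum_succ (f := fun n : ℕ ↦ ((n : ℝ) ^ (p : ℤ))⁻¹)).trans (by simp)

theorem mu_eq_tsum (r j : ℕ) : mu r j = ∑' k : ℕ, (((k : ℝ) + 1) ^ r * ((k : ℝ) + 1 + j))⁻¹ :=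
  (tsum_pnat_eq_tsum_succ (f := fun n : ℕ ↦ 1 / ((n : ℝ) ^ r * ((n : ℝ) + j)))).trans (by simp)

theorem summable_inv_add_one_pow {p : ℕ} (hp : 1 < p) :
    Summable fun k : ℕ ↦ (((k : ℝ) + 1) ^ p)⁻¹ := by
  simpa using (summable_nat_add_iff 1).mpr (Real.summable_nat_pow_inv.mpr hp)

theorem summable_inv_add_one_pow_mul_add {r : ℕ} (hr : 1 ≤ r) (j : ℕ) :
    Summable fun k : ℕ ↦ (((k : ℝ) + 1) ^ r * ((k : ℝ) + 1 + j))⁻¹ := by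
  refine (summable_inv_add_one_pow (p := r + 1) (by omega)).of_nonneg_of_le (fun k ↦ by positivity)
    fun k ↦ inv_anti₀ (by positivity) ?_
  rw [pow_succ]
  exact mul_le_mul_of_nonneg_left (le_add_of_nonneg_right j.cast_nonneg) (by positivity)

theorem mu_pred_zero {p : ℕ} (hp : p ≠ 0) : mu (p - 1) 0 = zv p := by
  refine tsum_congr fun n ↦ ?_
  rw [Nat.cast_zero, add_zero, pow_sub_one_mul hp, zpow_natCast, one_div]

theorem natCast_mul_mu {p : ℕ} (hp : 2 ≤ p) (j : ℕ) : (j : ℝ) * mu p j = zv p - mu (p - 1) j := by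
  rw [mu_eq_tsum, mu_eq_tsum, zv_natCast_eq_tsum, ← tsum_mul_left,
    ← (summable_inv_add_one_pow hp).tsum_sub (summable_inv_add_one_pow_mul_add (by omega) j)]
  refine tsum_congr fun k ↦ ?_
  rw [← pow_sub_one_mul (by omega : p ≠ 0)]
  field_simp
  ring

theorem tsum_gH_div_choose (p q : ℕ) (hp : 2 ≤ p) (hq : q ≠ 0) :
    ∑' n : ℕ+, gH p n / ((((n : ℕ) + (q + 1)).choose (q + 1) : ℕ) : ℝ)
      = (q + 1) / q * ∑ j ∈ range (q + 1), (-1) ^ j * q.choose j * mu (p - 1) j := by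
  set a : ℕ → ℝ := fun n ↦ (((n + 1 + q + 1).choose (q + 1) : ℕ) : ℝ)⁻¹
  have htail (k : ℕ) : ∑' i, a (i + k) = (q + 1) / q * (((k + 1 + q).choose q : ℕ) : ℝ)⁻¹ := by
    simpa [a, add_assoc] using (hasSum_inv_choose_add q (k + 1) hq).tsum_eq
  have hterm (k : ℕ) : (((k : ℝ) + 1) ^ p)⁻¹ * (((k + 1 + q).choose q : ℕ) : ℝ)⁻¹
      = ∑ j ∈ range (q + 1),
          (-1) ^ j * q.choose j * (((k : ℝ) + 1) ^ (p - 1) * ((k : ℝ) + 1 + j))⁻¹ := by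
    rw [inv_choose_add_eq_sum q (by omega : 0 < k + 1), mul_sum, mul_sum]
    refine sum_congr rfl fun j _ ↦ ?_
    rw [← pow_sub_one_mul (by omega : p ≠ 0)]
    push_cast
    field_simp
  calc ∑' n : ℕ+, gH p n / ((((n : ℕ) + (q + 1)).choose (q + 1) : ℕ) : ℝ)
      = ∑' n, (∑ k ∈ range (n + 1), (((k : ℝ) + 1) ^ p)⁻¹) * a n := by
        rw [tsum_pnat_eq_tsum_succ (f := fun n ↦ gH p n / (((n + (q + 1)).choose (q + 1) : ℕ) : ℝ))]
        simp only [gH_succ_eq_sum_range, div_eq_mul_inv, a, add_assoc]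
    _ = ∑' k : ℕ, (((k : ℝ) + 1) ^ p)⁻¹ * ∑' i, a (i + k) := by
        refine tsum_sum_range_mul_eq_tsum_mul_tsum_add (fun k ↦ by positivity)
          (fun n ↦ by positivity) (summable_inv_add_one_pow hp) ?_
        simpa [a, add_assoc] using (hasSum_inv_choose_add q 1 hq).summable
    _ = (q + 1) / q * ∑' k : ℕ, ∑ j ∈ range (q + 1),
          (-1) ^ j * q.choose j * (((k : ℝ) + 1) ^ (p - 1) * ((k : ℝ) + 1 + j))⁻¹ := by
        rw [← tsum_mul_left]
        refine tsum_congr fun k ↦ ?_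
        rw [htail, mul_left_comm, hterm]
    _ = (q + 1) / q * ∑ j ∈ range (q + 1), (-1) ^ j * q.choose j * mu (p - 1) j := by
        rw [Summable.tsum_finsetSum fun j _ ↦
          (summable_inv_add_one_pow_mul_add (by omega) j).mul_left _]
        simp only [mu_eq_tsum, tsum_mul_left]

theorem sum_range_eq_add_sum_Icc {M : Type*} [AddCommMonoid M] (g : ℕ → M) (q : ℕ) :
    ∑ j ∈ range (q + 1), g j = g 0 + ∑ j ∈ Icc 1 q, g j := by
  rw [Nat.range_succ_eq_Icc_zero, ← insert_Icc_add_one_left_eq_Icc q.zero_le, zero_add,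
    sum_insert (by simp)]

theorem sum_Icc_neg_one_pow_mul_choose {q : ℕ} (hq : q ≠ 0) :
    ∑ j ∈ Icc 1 q, (-1 : ℝ) ^ j * q.choose j = -1 := by
  have h : ∑ j ∈ range (q + 1), (-1 : ℝ) ^ j * q.choose j = 0 := by
    exact_mod_cast (Int.alternating_sum_range_choose (n := q)).trans (if_neg hq)
  rw [sum_range_eq_add_sum_Icc] at h
  simpa using eq_neg_of_add_eq_zero_right h

theorem sum_range_choose_mu_pred_eq (p q : ℕ) (hp : 2 ≤ p) (hq : q ≠ 0) :
    (q + 1) / q * ∑ j ∈ range (q + 1), (-1) ^ j * q.choose j * mu (p - 1) j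
      = zv p + ∑ j ∈ Icc 1 q,
          (-1) ^ j * (q.choose j * mu (p - 1) j - (q - 1).choose (j - 1) * mu p j) := by
  have hterm (j : ℕ) (hj : j ∈ Icc 1 q) :
      (-1) ^ j * (q.choose j * mu (p - 1) j - (q - 1).choose (j - 1) * mu p j)
        = (q + 1) / q * ((-1) ^ j * q.choose j * mu (p - 1) j)
          - zv p / q * ((-1) ^ j * q.choose j) := by
    obtain ⟨hj1, -⟩ := mem_Icc.mp hj
    have hchoose : ((q - 1).choose (j - 1) : ℝ) = q.choose j * j / q := by
      rw [eq_div_iff (by positivity)]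
      have := Nat.add_one_mul_choose_eq (q - 1) (j - 1)
      rw [Nat.sub_add_cancel (by omega), Nat.sub_add_cancel hj1] at this
      exact_mod_cast (mul_comm _ _).trans this
    rw [hchoose, show (q.choose j * j / q : ℝ) * mu p j = q.choose j / q * (j * mu p j) by ring,
      natCast_mul_mu hp]
    field_simp
    ring
  rw [sum_range_eq_add_sum_Icc, mu_pred_zero (by omega), sum_congr rfl hterm, sum_sub_distrib,
    ← mul_sum, ← mul_sum, sum_Icc_neg_one_pow_mul_choose hq, pow_zero, Nat.choose_zero_right,
    Nat.cast_one, one_mul, one_mul]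
  field_simp
  ring

/-- `∑_{n≥1} H_n^{(p)}/C(n+l,l)` in terms of `ζ(p)` and `μ` values. -/
theorem stmt_14 (p l : ℕ) (hp : 2 ≤ p) (hl : 1 < l) :
    ∑' n : ℕ+, gH p n / ((((n : ℕ) + l).choose l : ℕ) : ℝ)
      = zv p
        + ∑ j ∈ Finset.Icc 1 (l - 1), (-1 : ℝ) ^ j *
            (((l - 1).choose j : ℝ) * mu (p - 1) j - ((l - 2).choose (j - 1) : ℝ) * mu p j) := by
  obtain ⟨q, rfl⟩ : ∃ q, l = q + 1 := ⟨l - 1, by omega⟩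
  rw [tsum_gH_div_choose p q hp (by omega), sum_range_choose_mu_pred_eq p q hp (by omega),
    Nat.add_sub_cancel, show q + 1 - 2 = q - 1 by omega]
end

section
/- For every integer m ≥ 1, Σ_{n=1}^∞ n·H_n / ((n+m)(n+m+1)(n+m+2)) = (H_{m+1} + 1) / (2(m+1)), where H_n is the n-th harmonic number. -/
open Finset Real

lemma gH1_eq_range (n : ℕ) : gH 1 n = ∑ i ∈ Finset.range n, ((i : ℝ) + 1)⁻¹ := by
  induction n with
  | zero => simp [gH]
  | succ n ih =>
    rw [gH, Finset.sum_Icc_succ_top (by omega : 1 ≤ n + 1), ← gH, ih,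
      Finset.sum_range_succ]
    push_cast
    simp

lemma gH1_succ (n : ℕ) : gH 1 (n + 1) = gH 1 n + ((n : ℝ) + 1)⁻¹ := by
  rw [gH1_eq_range, gH1_eq_range, Finset.sum_range_succ]

lemma gH1_nonneg (n : ℕ) : 0 ≤ gH 1 n := by
  rw [gH1_eq_range]
  exact Finset.sum_nonneg fun i _ => by positivity

lemma gH1_diff (N m : ℕ) :
    gH 1 (N + m) - gH 1 N = ∑ i ∈ Finset.range m, (((N : ℝ) + i) + 1)⁻¹ := by
  rw [gH1_eq_range, gH1_eq_range, Finset.sum_range_add]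
  push_cast
  ring

lemma gH1_le (n : ℕ) : gH 1 n ≤ (n : ℝ) := by
  induction n with
  | zero => simp [gH]
  | succ n ih =>
    rw [gH1_succ]
    push_cast
    have : ((n : ℝ) + 1)⁻¹ ≤ 1 := by
      rw [inv_le_one_iff₀]; right; linarith [Nat.cast_nonneg (α := ℝ) n]
    linarith

lemma gH1_div_tendsto : Filter.Tendsto (fun N : ℕ => gH 1 N / (N : ℝ))
    Filter.atTop (nhds 0) := by
  have h0 : Filter.Tendsto (fun i : ℕ => ((i : ℝ) + 1)⁻¹) Filter.atTop (nhds 0) := by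
    apply Filter.Tendsto.inv_tendsto_atTop
    exact Filter.tendsto_atTop_add_const_right _ 1 tendsto_natCast_atTop_atTop
  have := h0.cesaro
  simp only [gH1_eq_range, div_eq_inv_mul]
  exact this

set_option maxHeartbeats 2000000 in
/-- `∑_{n≥1} n·H_n/((n+m)(n+m+1)(n+m+2)) = (H_{m+1}+1)/(2(m+1))`. -/
theorem stmt_17 (m : ℕ) (hm : 1 ≤ m) :
    ∑' n : ℕ+, (n : ℝ) * gH 1 n /
        (((n : ℝ) + m) * ((n : ℝ) + m + 1) * ((n : ℝ) + m + 2))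
      = (gH 1 (m + 1) + 1) / (2 * ((m : ℝ) + 1)) := by
  set L : ℝ := (gH 1 (m + 1) + 1) / (2 * ((m : ℝ) + 1)) with hL
  set g : ℕ → ℝ := fun n =>
    (n : ℝ) * gH 1 n / (((n : ℝ) + m) * ((n : ℝ) + m + 1) * ((n : ℝ) + m + 2))
    with hg
  have hmpos : (0 : ℝ) < m := by exact_mod_cast hm
  -- closed form for partial sums
  set F : ℕ → ℝ := fun N =>
    L + (1 / 2) * (gH 1 (N + m) - gH 1 N)
      - (((m : ℝ) + 2) / (2 * ((m : ℝ) + 1))) * (gH 1 (N + m + 1) - gH 1 N)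
      - gH 1 N / ((N : ℝ) + m + 2)
      + (m : ℝ) * gH 1 N / (2 * ((N : ℝ) + m + 1) * ((N : ℝ) + m + 2))
    with hF
  have key : ∀ N, ∑ n ∈ Finset.range (N + 1), g n = F N := by
    intro N
    induction N with
    | zero =>
      have hs : gH 1 (m + 1) = gH 1 m + ((m : ℝ) + 1)⁻¹ := gH1_succ m
      have h00 : gH 1 0 = 0 := by simp [gH]
      simp only [Finset.sum_range_one, hg, hF, hL, Nat.zero_add, Nat.cast_zero, zero_add, h00]
      rw [hs]
      field_simp
      ring
    | succ N ih =>
      rw [Finset.sum_range_succ, ih]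
      have e1 : gH 1 (N + 1) = gH 1 N + ((N : ℝ) + 1)⁻¹ := gH1_succ N
      have e2 : gH 1 (N + 1 + m) = gH 1 (N + m) + (((N : ℝ) + m) + 1)⁻¹ := by
        have := gH1_succ (N + m)
        rw [show N + 1 + m = N + m + 1 by ring, this]
        push_cast; ring_nf
      have e3 : gH 1 (N + 1 + m + 1) = gH 1 (N + m + 1) + (((N : ℝ) + m + 1) + 1)⁻¹ := by
        have := gH1_succ (N + m + 1)
        rw [show N + 1 + m + 1 = N + m + 1 + 1 by ring, this]
        push_cast; ring_nf
      have e4 : gH 1 (N + m + 1) = gH 1 (N + m) + (((N : ℝ) + m) + 1)⁻¹ := by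
        have := gH1_succ (N + m); rw [this]; push_cast; ring_nf
      simp only [hF, hg, e1, e2, e3, e4]
      push_cast
      have h1 : ((N : ℝ) + 1) ≠ 0 := by positivity
      have h2 : ((N : ℝ) + m) + 1 ≠ 0 := by positivity
      have h3 : ((N : ℝ) + m + 1) + 1 ≠ 0 := by positivity
      have h4 : ((N : ℝ) + m + 2) ≠ 0 := by positivity
      have h5 : ((N : ℝ) + m + 3) ≠ 0 := by positivity
      have h6 : ((m : ℝ) + 1) ≠ 0 := by positivity
      field_simp
      ring
  -- partial sums tend to L
  have hFlim : Filter.Tendsto F Filter.atTop (nhds L) := by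
    have t1 : Filter.Tendsto (fun N : ℕ => gH 1 (N + m) - gH 1 N)
        Filter.atTop (nhds 0) := by
      simp only [gH1_diff]
      have : (0 : ℝ) = ∑ _i ∈ Finset.range m, (0 : ℝ) := by simp
      rw [this]
      apply tendsto_finset_sum
      intro i _
      apply Filter.Tendsto.inv_tendsto_atTop
      apply Filter.tendsto_atTop_add_const_right
      apply Filter.tendsto_atTop_add_const_right
      exact tendsto_natCast_atTop_atTop
    have t2 : Filter.Tendsto (fun N : ℕ => gH 1 (N + m + 1) - gH 1 N)
        Filter.atTop (nhds 0) := by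
      have : ∀ N : ℕ, gH 1 (N + m + 1) - gH 1 N = gH 1 (N + (m + 1)) - gH 1 N := by
        intro N; rw [show N + (m + 1) = N + m + 1 by ring]
      simp only [this, gH1_diff]
      have h0 : (0 : ℝ) = ∑ _i ∈ Finset.range (m + 1), (0 : ℝ) := by simp
      rw [h0]
      apply tendsto_finset_sum
      intro i _
      apply Filter.Tendsto.inv_tendsto_atTop
      apply Filter.tendsto_atTop_add_const_right
      apply Filter.tendsto_atTop_add_const_right
      exact tendsto_natCast_atTop_atTop
    have t3 : Filter.Tendsto (fun N : ℕ => gH 1 N / ((N : ℝ) + m + 2))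
        Filter.atTop (nhds 0) := by
      apply tendsto_of_tendsto_of_tendsto_of_le_of_le'
        (tendsto_const_nhds : Filter.Tendsto (fun _ : ℕ => (0:ℝ)) Filter.atTop (nhds 0))
        gH1_div_tendsto
      · filter_upwards [Filter.eventually_ge_atTop 1] with N hN
        have hN1 : (1 : ℝ) ≤ (N : ℝ) := by exact_mod_cast hN
        have := gH1_nonneg N
        positivity
      · filter_upwards [Filter.eventually_ge_atTop 1] with N hN
        have hN1 : (1 : ℝ) ≤ (N : ℝ) := by exact_mod_cast hN
        apply div_le_div_of_nonneg_left (gH1_nonneg N) (by linarith) (by linarith)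
    have t4 : Filter.Tendsto
        (fun N : ℕ => (m : ℝ) * gH 1 N / (2 * ((N : ℝ) + m + 1) * ((N : ℝ) + m + 2)))
        Filter.atTop (nhds 0) := by
      have t4i : Filter.Tendsto
          (fun N : ℕ => gH 1 N / (2 * ((N : ℝ) + m + 1) * ((N : ℝ) + m + 2)))
          Filter.atTop (nhds 0) := by
        apply tendsto_of_tendsto_of_tendsto_of_le_of_le'
          (tendsto_const_nhds : Filter.Tendsto (fun _ : ℕ => (0:ℝ)) Filter.atTop (nhds 0))
          gH1_div_tendsto
        · filter_upwards [Filter.eventually_ge_atTop 1] with N hN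
          have hN1 : (1 : ℝ) ≤ (N : ℝ) := by exact_mod_cast hN
          have := gH1_nonneg N
          positivity
        · filter_upwards [Filter.eventually_ge_atTop 1] with N hN
          have hN1 : (1 : ℝ) ≤ (N : ℝ) := by exact_mod_cast hN
          apply div_le_div_of_nonneg_left (gH1_nonneg N) (by linarith)
          nlinarith [hmpos]
      have := t4i.const_mul (m : ℝ)
      simp only [mul_zero] at this
      simpa [mul_div_assoc] using this
    have : Filter.Tendsto F Filter.atTop
        (nhds (L + (1/2) * 0 - (((m : ℝ) + 2) / (2 * ((m : ℝ) + 1))) * 0 - 0 + 0)) := by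
      exact ((((tendsto_const_nhds.add (t1.const_mul _)).sub
        (t2.const_mul _)).sub t3).add t4)
    simpa using this
  have hSlim : Filter.Tendsto (fun N => ∑ n ∈ Finset.range N, g n)
      Filter.atTop (nhds L) := by
    rw [← Filter.tendsto_add_atTop_iff_nat 1]
    simpa only [key] using hFlim
  have hgnn : ∀ n, 0 ≤ g n := by
    intro n
    have hh := gH1_nonneg n
    have h1 : (0:ℝ) ≤ (n : ℝ) := Nat.cast_nonneg n
    have hA : (0:ℝ) < (n : ℝ) + m := by linarith
    have hd : (0:ℝ) < ((n : ℝ) + m) * ((n : ℝ) + m + 1) * ((n : ℝ) + m + 2) :=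
      mul_pos (mul_pos hA (by linarith)) (by linarith)
    exact div_nonneg (by positivity) hd.le
  have hmono : Monotone (fun N => ∑ n ∈ Finset.range N, g n) := by
    intro a b hab
    exact Finset.sum_le_sum_of_subset_of_nonneg (Finset.range_subset_range.2 hab)
      (fun i _ _ => hgnn i)
  have hbdd : ∀ N, ∑ n ∈ Finset.range N, g n ≤ L :=
    hmono.ge_of_tendsto hSlim
  have hsummable : Summable g := summable_of_sum_range_le hgnn hbdd
  have hsum : HasSum g L := hsummable.hasSum_iff_tendsto_nat.2 hSlim
  -- transfer to ℕ+
  have hinj : Function.Injective (fun n : ℕ+ => (n : ℕ)) := fun a b h => PNat.coe_injective h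
  have hzero : ∀ x ∉ Set.range (fun n : ℕ+ => (n : ℕ)), g x = 0 := by
    intro x hx
    have : x = 0 := by
      by_contra h
      exact hx ⟨⟨x, Nat.pos_of_ne_zero h⟩, rfl⟩
    rw [this]
    simp only [hg, Nat.cast_zero, zero_mul, zero_div]
  have hsum' : HasSum (fun n : ℕ+ => g (n : ℕ)) L :=
    (Function.Injective.hasSum_iff hinj hzero).2 hsum
  have heq : ∑' n : ℕ+, g (n : ℕ) = L := hsum'.tsum_eq
  rw [← heq]
end

section
/- For all integers p ≥ 1 and r > 4, the Euler sum of generalized hyperharmonic numbers of order (p, 4) satisfies ζ_{H^{(p,4)}}(r) = ζ_{H^{(p)}}(r) + (11/6)·ζ_{H^{(p)}}(r−1) + ζ_{H^{(p)}}(r−2) + (1/6)·ζ_{H^{(p)}}(r−3) − (11/6)·ζ_{H^{(p−1)}}(r) − 2·ζ_{H^{(p−1)}}(r−1) − (1/2)·ζ_{H^{(p−1)}}(r−2) + ζ_{H^{(p−2)}}(r) + (1/2)·ζ_{H^{(p−2)}}(r−1) − (1/6)·ζ_{H^{(p−3)}}(r). -/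
open Finset Real

/- ### Auxiliary lemmas -/

private lemma gHH_one (p : ℤ) (n : ℕ) : gHH p 1 n = ∑ k ∈ Icc 1 n, ((k:ℝ)^p)⁻¹ := by
  show (∑ k ∈ Icc 1 n, gHH p 0 k) = _
  refine Finset.sum_congr rfl fun k hk => ?_
  have hk0 : k ≠ 0 := by have := (Finset.mem_Icc.mp hk).1; omega
  simp [gHH, hk0]

private lemma hyper_step (p : ℤ) (q : ℕ) (v V : ℝ → ℝ)
    (hbase : ∀ n : ℕ, gHH p q n = ∑ k ∈ Icc 1 n, v ((n:ℝ) - k) * ((k:ℝ)^p)⁻¹)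
    (hV0 : V 0 = v 0) (hVs : ∀ x : ℝ, V (x+1) = V x + v (x+1)) :
    ∀ n : ℕ, gHH p (q+1) n = ∑ k ∈ Icc 1 n, V ((n:ℝ) - k) * ((k:ℝ)^p)⁻¹ := by
  intro n
  induction n with
  | zero => simp [gHH]
  | succ n ih =>
    have hrec : gHH p (q+1) (n+1) = gHH p (q+1) n + gHH p q (n+1) := by
      show (∑ k ∈ Icc 1 (n+1), gHH p q k) = (∑ k ∈ Icc 1 n, gHH p q k) + _
      exact Finset.sum_Icc_succ_top (by omega) _
    rw [hrec, ih, hbase]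
    rw [Finset.sum_Icc_succ_top (show 1 ≤ n+1 by omega),
        Finset.sum_Icc_succ_top (show 1 ≤ n+1 by omega)]
    push_cast
    have h1 : ∀ k ∈ Icc 1 n, V ((n:ℝ) + 1 - k) * ((k:ℝ)^p)⁻¹
        = V ((n:ℝ) - k) * ((k:ℝ)^p)⁻¹ + v ((n:ℝ) + 1 - k) * ((k:ℝ)^p)⁻¹ := by
      intro k _
      rw [show ((n:ℝ) + 1 - k) = ((n:ℝ) - k) + 1 by ring, hVs]
      ring
    rw [Finset.sum_congr rfl h1, Finset.sum_add_distrib]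
    rw [show ((n:ℝ) + 1 - ((n:ℝ)+1)) = 0 by ring, hV0]
    ring

private lemma gHH_four (p : ℤ) (n : ℕ) :
    gHH p 4 n = ∑ k ∈ Icc 1 n,
      ((n:ℝ) - k + 1) * ((n:ℝ) - k + 2) * ((n:ℝ) - k + 3) / 6 * ((k:ℝ)^p)⁻¹ := by
  have b1 : ∀ n : ℕ, gHH p 1 n
      = ∑ k ∈ Icc 1 n, (fun _ : ℝ => (1:ℝ)) ((n:ℝ) - k) * ((k:ℝ)^p)⁻¹ := by
    intro n; rw [gHH_one]; simp
  have b2 := hyper_step p 1 (fun _ : ℝ => (1:ℝ)) (fun x => x + 1) b1 (by norm_num)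
    (fun x => by ring)
  have b3 := hyper_step p 2 (fun x => x + 1) (fun x => (x+1)*(x+2)/2) b2 (by norm_num)
    (fun x => by ring)
  have b4 := hyper_step p 3 (fun x => (x+1)*(x+2)/2) (fun x => (x+1)*(x+2)*(x+3)/6) b3
    (by norm_num) (fun x => by ring)
  exact b4 n

private lemma harm_le (n : ℕ) : (∑ k ∈ Icc 1 n, ((k:ℝ))⁻¹) ≤ 2 * Real.sqrt n := by
  induction n with
  | zero => simp
  | succ n ih =>
    rw [Finset.sum_Icc_succ_top (by omega)]
    have hb2 : Real.sqrt n * Real.sqrt n = n := Real.mul_self_sqrt (by positivity)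
    have ha2 : Real.sqrt (n+1) * Real.sqrt (n+1) = (n:ℝ)+1 := by
      rw [Real.mul_self_sqrt (by positivity)]
    have hba : Real.sqrt n ≤ Real.sqrt (n+1) := Real.sqrt_le_sqrt (by push_cast; linarith)
    have ha : Real.sqrt (n+1) ≤ (n:ℝ)+1 := by
      nlinarith [Real.sqrt_nonneg ((n:ℝ)+1), ha2]
    have hb0 : 0 ≤ Real.sqrt n := Real.sqrt_nonneg _
    have hpos : (0:ℝ) < (n:ℝ) + 1 := by positivity
    have key : ((n:ℝ)+1)⁻¹ ≤ 2 * (Real.sqrt (n+1) - Real.sqrt n) := by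
      rw [inv_le_iff_one_le_mul₀ hpos]
      nlinarith [mul_nonneg (sub_nonneg.2 hba)
        (by nlinarith : (0:ℝ) ≤ 2*((n:ℝ)+1) - (Real.sqrt (n+1) + Real.sqrt n))]
    push_cast
    linarith

private lemma summable_base : Summable (fun n : ℕ+ => 2 * Real.sqrt (n:ℕ) / ((n:ℕ):ℝ)^2) := by
  have h : Summable (fun n : ℕ => 2 * ((n:ℝ) ^ (-(3/2) : ℝ))) :=
    (Real.summable_nat_rpow.mpr (by norm_num)).mul_left 2
  have h2 : Summable (fun n : ℕ => 2 * Real.sqrt n / (n:ℝ)^2) := by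
    refine h.congr fun n => ?_
    rcases Nat.eq_zero_or_pos n with hn | hn
    · subst hn; simp [Real.zero_rpow (by norm_num : (-(3/2):ℝ) ≠ 0)]
    · have h0 : (0:ℝ) < n := by exact_mod_cast hn
      have hs : Real.sqrt n * Real.sqrt n = (n:ℝ) := Real.mul_self_sqrt h0.le
      have hs0 : (0:ℝ) < Real.sqrt n := Real.sqrt_pos.mpr h0
      rw [Real.rpow_neg h0.le, show (3/2:ℝ) = 1 + 2⁻¹ by norm_num, Real.rpow_add h0,
        Real.rpow_one, show ((2:ℝ)⁻¹) = (1/2:ℝ) by norm_num, ← Real.sqrt_eq_rpow]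
      field_simp
      nlinarith [hs]
  exact h2.comp_injective PNat.coe_injective

private lemma summable_gH (q s : ℤ) (c : ℕ) (hq : 1 - (c:ℤ) ≤ q) (hs : (c:ℤ) + 2 ≤ s) :
    Summable (fun n : ℕ+ => gH q n / ((n:ℕ):ℝ)^s) := by
  refine Summable.of_nonneg_of_le (fun n => ?_) (fun n => ?_) summable_base
  · have h1 : (0:ℝ) ≤ gH q n := by
      refine Finset.sum_nonneg fun k hk => ?_
      have : (0:ℝ) < k := by
        have := (Finset.mem_Icc.mp hk).1; exact_mod_cast Nat.lt_of_lt_of_le Nat.zero_lt_one this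
      positivity
    have h2 : (0:ℝ) < ((n:ℕ):ℝ)^s := by
      have : (0:ℝ) < ((n:ℕ):ℝ) := by exact_mod_cast n.pos
      positivity
    positivity
  · set N : ℝ := ((n:ℕ):ℝ) with hN
    have hN1 : 1 ≤ N := by rw [hN]; exact_mod_cast n.one_le
    have hN0 : (0:ℝ) < N := lt_of_lt_of_le zero_lt_one hN1
    have hg : gH q n ≤ N^(c:ℕ) * (2 * Real.sqrt (n:ℕ)) := by
      have step : gH q n ≤ ∑ k ∈ Icc 1 (n:ℕ), N^(c:ℕ) * ((k:ℝ))⁻¹ := by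
        refine Finset.sum_le_sum fun k hk => ?_
        obtain ⟨hk1, hkn⟩ := Finset.mem_Icc.mp hk
        have hk1' : (1:ℝ) ≤ (k:ℝ) := by exact_mod_cast hk1
        have hk0 : (0:ℝ) < (k:ℝ) := lt_of_lt_of_le zero_lt_one hk1'
        have e1 : ((k:ℝ)^q)⁻¹ = (k:ℝ)^(-q) := (zpow_neg _ _).symm
        rw [e1]
        have e2 : (k:ℝ)^(-q) ≤ (k:ℝ)^((c:ℤ)-1) := zpow_le_zpow_right₀ hk1' (by omega)
        have e3 : (k:ℝ)^((c:ℤ)-1) = (k:ℝ)^(c:ℕ) * ((k:ℝ))⁻¹ := by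
          rw [zpow_sub₀ (ne_of_gt hk0), zpow_one, zpow_natCast]; ring
        have e4 : (k:ℝ)^(c:ℕ) ≤ N^(c:ℕ) := by
          refine pow_le_pow_left₀ hk0.le ?_ c
          rw [hN]; exact_mod_cast hkn
        calc (k:ℝ)^(-q) ≤ (k:ℝ)^((c:ℤ)-1) := e2
          _ = (k:ℝ)^(c:ℕ) * ((k:ℝ))⁻¹ := e3
          _ ≤ N^(c:ℕ) * ((k:ℝ))⁻¹ := mul_le_mul_of_nonneg_right e4 (by positivity)
      calc gH q n ≤ ∑ k ∈ Icc 1 (n:ℕ), N^(c:ℕ) * ((k:ℝ))⁻¹ := step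
        _ = N^(c:ℕ) * ∑ k ∈ Icc 1 (n:ℕ), ((k:ℝ))⁻¹ := by rw [Finset.mul_sum]
        _ ≤ N^(c:ℕ) * (2 * Real.sqrt (n:ℕ)) :=
            mul_le_mul_of_nonneg_left (harm_le _) (by positivity)
    have hpow : N^((c:ℤ)+2) ≤ N^s := zpow_le_zpow_right₀ hN1 hs
    have hpow0 : (0:ℝ) < N^((c:ℤ)+2) := by positivity
    have hgn : (0:ℝ) ≤ gH q n := by
      refine Finset.sum_nonneg fun k hk => ?_
      have : (0:ℝ) < k := by
        have := (Finset.mem_Icc.mp hk).1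
        exact_mod_cast Nat.lt_of_lt_of_le Nat.zero_lt_one this
      positivity
    calc gH q n / N^s ≤ gH q n / N^((c:ℤ)+2) :=
          div_le_div_of_nonneg_left hgn hpow0 hpow
      _ ≤ (N^(c:ℕ) * (2 * Real.sqrt (n:ℕ))) / N^((c:ℤ)+2) := by
          exact (div_le_div_iff_of_pos_right hpow0).mpr hg
      _ = 2 * Real.sqrt (n:ℕ) / N^2 := by
          have e : N^((c:ℤ)+2) = N^c * N^2 := by
            rw [zpow_add₀ (ne_of_gt hN0), zpow_natCast, zpow_two, pow_two]
          rw [e, div_eq_div_iff (by positivity) (by positivity)]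
          ring

/-- The Euler sum `ζ_{H^{(p,4)}}(r)` in terms of Euler sums of generalized
harmonic numbers, for `p ≥ 1` and `r > 4`. -/
theorem stmt_18 (p r : ℤ) (hp : 1 ≤ p) (hr : 4 < r) :
    eulerSumHH p 4 r
      = eulerSum p r + 11 / 6 * eulerSum p (r - 1) + eulerSum p (r - 2)
        + 1 / 6 * eulerSum p (r - 3)
        - 11 / 6 * eulerSum (p - 1) r - 2 * eulerSum (p - 1) (r - 1)
        - 1 / 2 * eulerSum (p - 1) (r - 2)
        + eulerSum (p - 2) r + 1 / 2 * eulerSum (p - 2) (r - 1)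
        - 1 / 6 * eulerSum (p - 3) r := by
  have S1 : Summable (fun n : ℕ+ => gH p n / ((n:ℕ):ℝ)^r) :=
    summable_gH p r 0 (by omega) (by omega)
  have S2 : Summable (fun n : ℕ+ => gH p n / ((n:ℕ):ℝ)^(r-1)) :=
    summable_gH p (r-1) 0 (by omega) (by omega)
  have S3 : Summable (fun n : ℕ+ => gH p n / ((n:ℕ):ℝ)^(r-2)) :=
    summable_gH p (r-2) 0 (by omega) (by omega)
  have S4 : Summable (fun n : ℕ+ => gH p n / ((n:ℕ):ℝ)^(r-3)) :=
    summable_gH p (r-3) 0 (by omega) (by omega)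
  have S5 : Summable (fun n : ℕ+ => gH (p-1) n / ((n:ℕ):ℝ)^r) :=
    summable_gH (p-1) r 1 (by omega) (by omega)
  have S6 : Summable (fun n : ℕ+ => gH (p-1) n / ((n:ℕ):ℝ)^(r-1)) :=
    summable_gH (p-1) (r-1) 1 (by omega) (by omega)
  have S7 : Summable (fun n : ℕ+ => gH (p-1) n / ((n:ℕ):ℝ)^(r-2)) :=
    summable_gH (p-1) (r-2) 1 (by omega) (by omega)
  have S8 : Summable (fun n : ℕ+ => gH (p-2) n / ((n:ℕ):ℝ)^r) :=
    summable_gH (p-2) r 2 (by omega) (by omega)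
  have S9 : Summable (fun n : ℕ+ => gH (p-2) n / ((n:ℕ):ℝ)^(r-1)) :=
    summable_gH (p-2) (r-1) 2 (by omega) (by omega)
  have S10 : Summable (fun n : ℕ+ => gH (p-3) n / ((n:ℕ):ℝ)^r) :=
    summable_gH (p-3) r 3 (by omega) (by omega)
  have S2' : Summable (fun n : ℕ+ => 11/6 * (gH p n / ((n:ℕ):ℝ)^(r-1))) := S2.mul_left _
  have S4' : Summable (fun n : ℕ+ => 1/6 * (gH p n / ((n:ℕ):ℝ)^(r-3))) := S4.mul_left _
  have S5' : Summable (fun n : ℕ+ => 11/6 * (gH (p-1) n / ((n:ℕ):ℝ)^r)) := S5.mul_left _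
  have S6' : Summable (fun n : ℕ+ => 2 * (gH (p-1) n / ((n:ℕ):ℝ)^(r-1))) := S6.mul_left _
  have S7' : Summable (fun n : ℕ+ => 1/2 * (gH (p-1) n / ((n:ℕ):ℝ)^(r-2))) := S7.mul_left _
  have S9' : Summable (fun n : ℕ+ => 1/2 * (gH (p-2) n / ((n:ℕ):ℝ)^(r-1))) := S9.mul_left _
  have S10' : Summable (fun n : ℕ+ => 1/6 * (gH (p-3) n / ((n:ℕ):ℝ)^r)) := S10.mul_left _
  have T12 := S1.add S2'
  have T13 := T12.add S3
  have T14 := T13.add S4'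
  have T15 := T14.sub S5'
  have T16 := T15.sub S6'
  have T17 := T16.sub S7'
  have T18 := T17.add S8
  have T19 := T18.add S9'
  unfold eulerSum
  rw [← tsum_mul_left (a := (11/6 : ℝ)), ← tsum_mul_left (a := (1/6 : ℝ)),
    ← tsum_mul_left (a := (11/6 : ℝ)), ← tsum_mul_left (a := (2 : ℝ)),
    ← tsum_mul_left (a := (1/2 : ℝ)), ← tsum_mul_left (a := (1/2 : ℝ)),
    ← tsum_mul_left (a := (1/6 : ℝ))]
  rw [← Summable.tsum_add S1 S2', ← Summable.tsum_add T12 S3, ← Summable.tsum_add T13 S4', ← Summable.tsum_sub T14 S5',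
    ← Summable.tsum_sub T15 S6', ← Summable.tsum_sub T16 S7', ← Summable.tsum_add T17 S8, ← Summable.tsum_add T18 S9',
    ← Summable.tsum_sub T19 S10']
  unfold eulerSumHH
  refine tsum_congr fun n => ?_
  have hN1 : (1:ℝ) ≤ ((n:ℕ):ℝ) := by exact_mod_cast n.one_le
  have hN0 : ((n:ℕ):ℝ) ≠ 0 := by positivity
  rw [gHH_four]
  unfold gH
  simp only [Finset.sum_div, Finset.mul_sum, ← Finset.sum_add_distrib, ← Finset.sum_sub_distrib]
  refine Finset.sum_congr rfl fun k hk => ?_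
  obtain ⟨hk1, hkn⟩ := Finset.mem_Icc.mp hk
  have hK1 : (1:ℝ) ≤ (k:ℝ) := by exact_mod_cast hk1
  have hK0 : (k:ℝ) ≠ 0 := by positivity
  have hKp : (k:ℝ)^p ≠ 0 := zpow_ne_zero _ hK0
  have hNr : ((n:ℕ):ℝ)^r ≠ 0 := zpow_ne_zero _ hN0
  simp only [zpow_sub₀ hK0, zpow_sub₀ hN0, zpow_one, zpow_two, zpow_ofNat]
  field_simp
  ring
end
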